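/- Assume A_q = exp(hH) and that Q − P + A_qᵀ P A_q is negative definite. Let x, r ∈ ℝ^n, let U* ∈ 𝒰^N minimize J(x, r, ·) over 𝒰^N with first element u*_0, and set x⁺ = A_q x + h B_q u*_0, r⁺ = exp(hH) r. If V(x⁺, r⁺) = V(x, r), then u*_0 = 0, x = r, and consequently V(x, r) = 0. -/

import Mathlib

open Matrix Filter Topology

/-- Predicted states of the quantized system: `x₀ = x`, `x_{i+1} = A_q x_i + h B_q u_i`
(inputs beyond the horizon are taken to be `0`, but they are never used below). -/
noncomputable def predState {n m N : ℕ} (Aq : Matrix (Fin n) (Fin n) ℝ)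
    (Bq : Matrix (Fin n) (Fin m) ℝ) (h : ℝ) (x : Fin n → ℝ)
    (U : Fin N → Fin m → ℝ) : ℕ → (Fin n → ℝ)
  | 0 => x
  | i + 1 => Aq *ᵥ (predState Aq Bq h x U i) +
      h • (Bq *ᵥ (if hi : i < N then U ⟨i, hi⟩ else 0))

/-- Reference states: `r_i = (exp (h H))^i r`. -/
noncomputable def refState {n : ℕ} (H : Matrix (Fin n) (Fin n) ℝ) (h : ℝ)
    (r : Fin n → ℝ) (i : ℕ) : Fin n → ℝ :=
  ((NormedSpace.exp (h • H)) ^ i) *ᵥ r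

/-- The MPC cost
`J(x, r, U) = (x_N - r_N)ᵀ P (x_N - r_N) + Σ_{i<N} [(x_i - r_i)ᵀ Q (x_i - r_i) + u_iᵀ R u_i]`. -/
noncomputable def mpcCost {n m N : ℕ} (Aq : Matrix (Fin n) (Fin n) ℝ)
    (Bq : Matrix (Fin n) (Fin m) ℝ) (H : Matrix (Fin n) (Fin n) ℝ) (h : ℝ)
    (P Q : Matrix (Fin n) (Fin n) ℝ) (R : Matrix (Fin m) (Fin m) ℝ)
    (x r : Fin n → ℝ) (U : Fin N → Fin m → ℝ) : ℝ :=
  (predState Aq Bq h x U N - refState H h r N) ⬝ᵥ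
      (P *ᵥ (predState Aq Bq h x U N - refState H h r N)) +
    ∑ i : Fin N,
      ((predState Aq Bq h x U i - refState H h r i) ⬝ᵥ
          (Q *ᵥ (predState Aq Bq h x U i - refState H h r i)) +
        (U i) ⬝ᵥ (R *ᵥ (U i)))

/-- The quantized input set `𝒰^N` with `𝒰 = {-1,0,1}^m`. -/
def quantSet (m N : ℕ) : Set (Fin N → Fin m → ℝ) :=
  {U | ∀ i j, U i j = -1 ∨ U i j = 0 ∨ U i j = 1}

/-- The value function `V(x,r) = min_{U ∈ 𝒰^N} J(x,r,U)`. -/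
noncomputable def valueFn {n m N : ℕ} (Aq : Matrix (Fin n) (Fin n) ℝ)
    (Bq : Matrix (Fin n) (Fin m) ℝ) (H : Matrix (Fin n) (Fin n) ℝ) (h : ℝ)
    (P Q : Matrix (Fin n) (Fin n) ℝ) (R : Matrix (Fin m) (Fin m) ℝ)
    (x r : Fin n → ℝ) : ℝ :=
  sInf ((fun U => mpcCost Aq Bq H h P Q R x r U) '' quantSet m N)

/-- The shifted input sequence: drop `u₀` and append `0`. -/
def shiftSeq {m N : ℕ} (U : Fin N → Fin m → ℝ) : Fin N → Fin m → ℝ :=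
  fun i => if hi : (i : ℕ) + 1 < N then U ⟨(i : ℕ) + 1, hi⟩ else 0

/-!
Shift the optimal sequence `U*` by one step and append a zero input. The shifted sequence is
admissible at `(x⁺, r⁺)`, its tracking errors are those of `U*` moved by one index, and past the
horizon the error evolves as `e_{N+1} = A_q e_N` because `A_q = exp(hH)` also propagates the
reference. Comparing the two costs term by term,
`J(x, r, U*) = J(x⁺, r⁺, shift U*) + e₀ᵀQe₀ + u₀ᵀRu₀ - e_Nᵀ(Q - P + A_qᵀPA_q)e_N`,
so `V(x⁺, r⁺) = V(x, r)` forces the three nonnegative correction terms to vanish: `u₀ = 0` and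
`e₀ = x - r = 0`. Once `x = r`, the zero input tracks the reference exactly and `V(x, r) = 0`.
-/

namespace Matrix

variable {ι : Type*} [Fintype ι] {M : Matrix ι ι ℝ}

lemma PosSemidef.dotProduct_mulVec_self_nonneg (hM : M.PosSemidef) (v : ι → ℝ) :
    0 ≤ v ⬝ᵥ (M *ᵥ v) :=
  hM.dotProduct_mulVec_nonneg v

lemma PosDef.eq_zero_of_dotProduct_mulVec_self_eq_zero (hM : M.PosDef) {v : ι → ℝ}
    (hv : v ⬝ᵥ (M *ᵥ v) = 0) : v = 0 := by
  by_contra hne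
  exact (hM.dotProduct_mulVec_pos hne).ne' hv

lemma dotProduct_mulVec_mulVec_self {R : Type*} [CommSemiring R] (A P : Matrix ι ι R)
    (v : ι → R) :
    (A *ᵥ v) ⬝ᵥ (P *ᵥ (A *ᵥ v)) = v ⬝ᵥ ((Aᵀ * P * A) *ᵥ v) := by
  conv_rhs => rw [Matrix.mul_assoc, ← mulVec_mulVec, dotProduct_mulVec, vecMul_transpose,
    ← mulVec_mulVec]

end Matrix

section InputSet

variable {m N : ℕ} {U : Fin N → Fin m → ℝ}

lemma quantSet_finite : (quantSet m N).Finite :=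
  Set.Finite.pi' fun _ => Set.Finite.pi' fun _ => Set.toFinite {-1, 0, 1}

lemma zero_mem_quantSet : (0 : Fin N → Fin m → ℝ) ∈ quantSet m N :=
  fun _ _ => Or.inr (Or.inl rfl)

lemma shiftSeq_mem_quantSet (hU : U ∈ quantSet m N) : shiftSeq U ∈ quantSet m N := by
  intro i j
  unfold shiftSeq
  split
  · exact hU _ _
  · exact Or.inr (Or.inl rfl)

end InputSet

section Cost

variable {n m N : ℕ} {Aq H : Matrix (Fin n) (Fin n) ℝ} {Bq : Matrix (Fin n) (Fin m) ℝ} {h : ℝ}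
  {P Q : Matrix (Fin n) (Fin n) ℝ} {R : Matrix (Fin m) (Fin m) ℝ}

def padInput (U : Fin N → Fin m → ℝ) (i : ℕ) : Fin m → ℝ :=
  if hi : i < N then U ⟨i, hi⟩ else 0

lemma padInput_fin (U : Fin N → Fin m → ℝ) (i : Fin N) : padInput U i = U i := by
  simp [padInput]

lemma padInput_of_le (U : Fin N → Fin m → ℝ) {i : ℕ} (hi : N ≤ i) : padInput U i = 0 :=
  dif_neg hi.not_gt

lemma padInput_shiftSeq (U : Fin N → Fin m → ℝ) (i : ℕ) :
    padInput (shiftSeq U) i = padInput U (i + 1) := by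
  by_cases hi : i < N
  · simp only [padInput, dif_pos hi]; rfl
  · rw [padInput_of_le _ (not_lt.mp hi), padInput_of_le _ (by omega)]

@[simp]
lemma predState_zero (x : Fin n → ℝ) (U : Fin N → Fin m → ℝ) : predState Aq Bq h x U 0 = x :=
  rfl

lemma predState_succ (x : Fin n → ℝ) (U : Fin N → Fin m → ℝ) (i : ℕ) :
    predState Aq Bq h x U (i + 1) = Aq *ᵥ predState Aq Bq h x U i + h • (Bq *ᵥ padInput U i) :=
  rfl

lemma predState_shiftSeq (hN : 0 < N) (x : Fin n → ℝ) (U : Fin N → Fin m → ℝ) (i : ℕ) :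
    predState Aq Bq h (Aq *ᵥ x + h • (Bq *ᵥ U ⟨0, hN⟩)) (shiftSeq U) i =
      predState Aq Bq h x U (i + 1) := by
  induction i with
  | zero => rw [predState_succ, padInput, dif_pos hN]; rfl
  | succ i ih => rw [predState_succ, predState_succ, ih, padInput_shiftSeq]

lemma refState_succ (r : Fin n → ℝ) (i : ℕ) :
    refState H h r (i + 1) = NormedSpace.exp (h • H) *ᵥ refState H h r i := by
  simp [refState, pow_succ']

lemma refState_exp_mulVec (r : Fin n → ℝ) (i : ℕ) :
    refState H h (NormedSpace.exp (h • H) *ᵥ r) i = refState H h r (i + 1) := by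
  simp [refState, pow_succ]

variable (Aq H Bq h) in
noncomputable def trackingError (x r : Fin n → ℝ) (U : Fin N → Fin m → ℝ) (i : ℕ) : Fin n → ℝ :=
  predState Aq Bq h x U i - refState H h r i

lemma trackingError_shift (hN : 0 < N) (x r : Fin n → ℝ) (U : Fin N → Fin m → ℝ) (i : ℕ) :
    trackingError Aq H Bq h (Aq *ᵥ x + h • (Bq *ᵥ U ⟨0, hN⟩)) (NormedSpace.exp (h • H) *ᵥ r)
        (shiftSeq U) i = trackingError Aq H Bq h x r U (i + 1) := by
  rw [trackingError, trackingError, predState_shiftSeq, refState_exp_mulVec]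

lemma trackingError_succ_of_le (hA : Aq = NormedSpace.exp (h • H)) (x r : Fin n → ℝ)
    (U : Fin N → Fin m → ℝ) {i : ℕ} (hi : N ≤ i) :
    trackingError Aq H Bq h x r U (i + 1) = Aq *ᵥ trackingError Aq H Bq h x r U i := by
  rw [trackingError, trackingError, predState_succ, padInput_of_le U hi, refState_succ, ← hA,
    mulVec_zero, smul_zero, add_zero, mulVec_sub]

variable (Aq H Bq h Q R) in
noncomputable def stageCost (x r : Fin n → ℝ) (U : Fin N → Fin m → ℝ) (i : ℕ) : ℝ :=
  trackingError Aq H Bq h x r U i ⬝ᵥ (Q *ᵥ trackingError Aq H Bq h x r U i) +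
    padInput U i ⬝ᵥ (R *ᵥ padInput U i)

lemma mpcCost_eq_sum_range (x r : Fin n → ℝ) (U : Fin N → Fin m → ℝ) :
    mpcCost Aq Bq H h P Q R x r U =
      trackingError Aq H Bq h x r U N ⬝ᵥ (P *ᵥ trackingError Aq H Bq h x r U N) +
        ∑ i ∈ Finset.range N, stageCost Aq H Bq h Q R x r U i := by
  rw [mpcCost, ← Fin.sum_univ_eq_sum_range]
  simp only [stageCost, trackingError, padInput_fin]

lemma mpcCost_shiftSeq (hN : 0 < N) (hA : Aq = NormedSpace.exp (h • H)) (x r : Fin n → ℝ)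
    (U : Fin N → Fin m → ℝ) :
    mpcCost Aq Bq H h P Q R x r U =
      mpcCost Aq Bq H h P Q R (Aq *ᵥ x + h • (Bq *ᵥ U ⟨0, hN⟩)) (NormedSpace.exp (h • H) *ᵥ r)
          (shiftSeq U) + stageCost Aq H Bq h Q R x r U 0 +
        trackingError Aq H Bq h x r U N ⬝ᵥ
          (-(Q - P + Aqᵀ * P * Aq) *ᵥ trackingError Aq H Bq h x r U N) := by
  set e := trackingError Aq H Bq h x r U
  have hstage : ∀ i, stageCost Aq H Bq h Q R (Aq *ᵥ x + h • (Bq *ᵥ U ⟨0, hN⟩))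
      (NormedSpace.exp (h • H) *ᵥ r) (shiftSeq U) i = stageCost Aq H Bq h Q R x r U (i + 1) := by
    intro i
    rw [stageCost, stageCost, trackingError_shift, padInput_shiftSeq]
  have hlast : stageCost Aq H Bq h Q R x r U N = e N ⬝ᵥ (Q *ᵥ e N) := by
    simp [stageCost, e, padInput_of_le U le_rfl]
  rw [mpcCost_eq_sum_range, mpcCost_eq_sum_range, trackingError_shift,
    trackingError_succ_of_le hA x r U le_rfl, dotProduct_mulVec_mulVec_self]
  simp only [hstage]
  have hsum := Finset.sum_range_succ' (stageCost Aq H Bq h Q R x r U) N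
  rw [Finset.sum_range_succ, hlast] at hsum
  simp only [neg_mulVec, add_mulVec, sub_mulVec, dotProduct_neg, dotProduct_add, dotProduct_sub]
  linarith

lemma stageCost_zero (hN : 0 < N) (x r : Fin n → ℝ) (U : Fin N → Fin m → ℝ) :
    stageCost Aq H Bq h Q R x r U 0 =
      (x - r) ⬝ᵥ (Q *ᵥ (x - r)) + U ⟨0, hN⟩ ⬝ᵥ (R *ᵥ U ⟨0, hN⟩) := by
  simp [stageCost, trackingError, refState, padInput, hN]

lemma mpcCost_nonneg (hP : P.PosSemidef) (hQ : Q.PosSemidef) (hR : R.PosSemidef)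
    (x r : Fin n → ℝ) (U : Fin N → Fin m → ℝ) : 0 ≤ mpcCost Aq Bq H h P Q R x r U :=
  add_nonneg (hP.dotProduct_mulVec_self_nonneg _) <| Finset.sum_nonneg fun _ _ =>
    add_nonneg (hQ.dotProduct_mulVec_self_nonneg _) (hR.dotProduct_mulVec_self_nonneg _)

lemma predState_zero_input (hA : Aq = NormedSpace.exp (h • H)) (r : Fin n → ℝ) (i : ℕ) :
    predState Aq Bq h r (0 : Fin N → Fin m → ℝ) i = refState H h r i := by
  induction i with
  | zero => simp [refState]
  | succ i ih =>
    rw [predState_succ, ih, refState_succ, ← hA]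
    simp [padInput]

lemma mpcCost_self_zero_input (hA : Aq = NormedSpace.exp (h • H)) (r : Fin n → ℝ) :
    mpcCost Aq Bq H h P Q R r r (0 : Fin N → Fin m → ℝ) = 0 := by
  simp [mpcCost, predState_zero_input hA]

lemma valueFn_le_mpcCost (x r : Fin n → ℝ) {U : Fin N → Fin m → ℝ} (hU : U ∈ quantSet m N) :
    valueFn (N := N) Aq Bq H h P Q R x r ≤ mpcCost Aq Bq H h P Q R x r U :=
  csInf_le (quantSet_finite.image _).bddBelow ⟨U, hU, rfl⟩

lemma valueFn_eq_mpcCost_of_forall_le {x r : Fin n → ℝ} {U : Fin N → Fin m → ℝ}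
    (hU : U ∈ quantSet m N)
    (hmin : ∀ V ∈ quantSet m N, mpcCost Aq Bq H h P Q R x r U ≤ mpcCost Aq Bq H h P Q R x r V) :
    valueFn (N := N) Aq Bq H h P Q R x r = mpcCost Aq Bq H h P Q R x r U :=
  IsLeast.csInf_eq ⟨⟨U, hU, rfl⟩, by rintro _ ⟨V, hV, rfl⟩; exact hmin V hV⟩

end Cost

theorem stmt7_general {n m N : ℕ} (hN : 0 < N) (h : ℝ)
    (Aq H : Matrix (Fin n) (Fin n) ℝ) (Bq : Matrix (Fin n) (Fin m) ℝ)
    (P Q : Matrix (Fin n) (Fin n) ℝ) (R : Matrix (Fin m) (Fin m) ℝ)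
    (hP : P.PosDef) (hQ : Q.PosDef) (hR : R.PosDef)
    (hA : Aq = NormedSpace.exp (h • H))
    (hneg : (-(Q - P + Aqᵀ * P * Aq)).PosDef)
    (x r : Fin n → ℝ) (Ustar : Fin N → Fin m → ℝ)
    (hmem : Ustar ∈ quantSet m N)
    (hmin : ∀ U ∈ quantSet m N,
      mpcCost Aq Bq H h P Q R x r Ustar ≤ mpcCost Aq Bq H h P Q R x r U)
    (heq : valueFn (N := N) Aq Bq H h P Q R
        (Aq *ᵥ x + h • (Bq *ᵥ Ustar ⟨0, hN⟩))
        (NormedSpace.exp (h • H) *ᵥ r) =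
      valueFn (N := N) Aq Bq H h P Q R x r) :
    Ustar ⟨0, hN⟩ = 0 ∧ x = r ∧ valueFn (N := N) Aq Bq H h P Q R x r = 0 := by
  have hV := valueFn_eq_mpcCost_of_forall_le hmem hmin
  have hle : mpcCost Aq Bq H h P Q R x r Ustar ≤ mpcCost Aq Bq H h P Q R
      (Aq *ᵥ x + h • (Bq *ᵥ Ustar ⟨0, hN⟩)) (NormedSpace.exp (h • H) *ᵥ r) (shiftSeq Ustar) := by
    rw [← hV, ← heq]; exact valueFn_le_mpcCost _ _ (shiftSeq_mem_quantSet hmem)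
  have hdecr := mpcCost_shiftSeq (Bq := Bq) (P := P) (Q := Q) (R := R) hN hA x r Ustar
  rw [stageCost_zero hN] at hdecr
  have hterm := hneg.posSemidef.dotProduct_mulVec_self_nonneg
    (trackingError Aq H Bq h x r Ustar N)
  have hQ0 := hQ.posSemidef.dotProduct_mulVec_self_nonneg (x - r)
  have hR0 := hR.posSemidef.dotProduct_mulVec_self_nonneg (Ustar ⟨0, hN⟩)
  have hu0 : Ustar ⟨0, hN⟩ = 0 := hR.eq_zero_of_dotProduct_mulVec_self_eq_zero (by linarith)
  have hxr : x = r := sub_eq_zero.mp (hQ.eq_zero_of_dotProduct_mulVec_self_eq_zero (by linarith))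
  subst hxr
  refine ⟨hu0, rfl, le_antisymm ?_ (hV ▸ mpcCost_nonneg hP.posSemidef hQ.posSemidef
    hR.posSemidef x x Ustar)⟩
  exact (valueFn_le_mpcCost x x zero_mem_quantSet).trans_eq (mpcCost_self_zero_input hA x)

/-- equality case: if the value function does not decrease over one closed-loop
step, then the applied optimal input is zero, `x = r`, and `V(x,r) = 0`. -/
theorem stmt7 {n m N : ℕ} (hN : 0 < N) (h : ℝ) (hh : 0 < h)
    (Aq H : Matrix (Fin n) (Fin n) ℝ) (Bq : Matrix (Fin n) (Fin m) ℝ)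
    (P Q : Matrix (Fin n) (Fin n) ℝ) (R : Matrix (Fin m) (Fin m) ℝ)
    (hP : P.PosDef) (hQ : Q.PosDef) (hR : R.PosDef)
    (hA : Aq = NormedSpace.exp (h • H))
    (hneg : (-(Q - P + Aqᵀ * P * Aq)).PosDef)
    (x r : Fin n → ℝ) (Ustar : Fin N → Fin m → ℝ)
    (hmem : Ustar ∈ quantSet m N)
    (hmin : ∀ U ∈ quantSet m N,
      mpcCost Aq Bq H h P Q R x r Ustar ≤ mpcCost Aq Bq H h P Q R x r U)
    (heq : valueFn (N := N) Aq Bq H h P Q R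
        (Aq *ᵥ x + h • (Bq *ᵥ Ustar ⟨0, hN⟩))
        (NormedSpace.exp (h • H) *ᵥ r) =
      valueFn (N := N) Aq Bq H h P Q R x r) :
    Ustar ⟨0, hN⟩ = 0 ∧ x = r ∧ valueFn (N := N) Aq Bq H h P Q R x r = 0 :=
  stmt7_general hN h Aq H Bq P Q R hP hQ hR hA hneg x r Ustar hmem hmin heq
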